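/- With p = 1/φ², where φ = (1+√5)/2, the probability that the random process A_n(p) produces the Zeckendorf decomposition of a fixed integer m ∈ [0, F_{n+1}) equals φ^{-n} if m ∈ [0, F_n) and φ^{-(n+1)} if m ∈ [F_n, F_{n+1}). -/

import Mathlib

/-!
Condition on the last coin. After `n + 1` steps the sum is the sum after `n` steps, plus
`F_{n+1}` exactly when the last coin is heads and `F_n` was not taken. A sum after `n` steps is
always below `F_{n+1}`, and it is at least `F_n` exactly when `F_n` was taken. So the target `m`
decides the last coin: tails if `m < F_n` (weight `1 - p = φ⁻¹`); heads with `F_n` not taken if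
`m ≥ F_{n+1}` (weight `p = φ⁻²`, new target `m - F_{n+1} < F_n`); either value if
`F_n ≤ m < F_{n+1}`, because then `F_n` was taken and heads adds nothing (weight
`p + (1 - p) = 1`). Induction on `n` finishes.
-/

open Finset

noncomputable section

def Fib (n : ℕ) : ℕ := Nat.fib (n + 1)

/-- `included c k` : whether `F_{k+1}` is included in the random Zeckendorf process,
given coins `c` (`c k` is the coin for step `k+1`): a Fibonacci number is included
with probability `p` when the previous one was not included, and is excluded otherwise. -/
def included (c : ℕ → Bool) : ℕ → Bool
  | 0 => c 0
  | k + 1 => !included c k && c (k + 1)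

/-- Extend a finite coin sequence by `false`. -/
def ext (n : ℕ) (c : Fin n → Bool) : ℕ → Bool :=
  fun j => if h : j < n then c ⟨j, h⟩ else false

/-- Probability weight of a finite coin sequence, each coin heads with probability `p`. -/
def wt (p : ℝ) {n : ℕ} (c : Fin n → Bool) : ℝ :=
  ∏ i, if c i then p else 1 - p

open Classical in
/-- Probability of an event depending on the first `n` coins. -/
def finProb (p : ℝ) (n : ℕ) (E : (ℕ → Bool) → Prop) : ℝ :=
  ∑ c : Fin n → Bool, if E (ext n c) then wt p c else 0

/-- `Prob (F_k ∈ A(p))` for `k ≥ 1`. -/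
def probIncl (p : ℝ) (k : ℕ) : ℝ :=
  finProb p k (fun c => included c (k - 1) = true)

/-- Expected value of a function of the first `n` coins. -/
def expVal (p : ℝ) (n : ℕ) (f : (ℕ → Bool) → ℝ) : ℝ :=
  ∑ c : Fin n → Bool, wt p c * f (ext n c)

/-- `W_n` : the number of selected indices among `1,...,n`. -/
def countIn (n : ℕ) (c : ℕ → Bool) : ℕ :=
  ((Icc 1 n).filter (fun j => included c (j - 1) = true)).card

open Real

def zeckSum (n : ℕ) (c : ℕ → Bool) : ℕ :=
  ∑ j ∈ Icc 1 n, if included c (j - 1) = true then Fib j else 0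

/-- Whether `F_n` is included; `false` for `n = 0`. -/
def lastIncluded : ℕ → (ℕ → Bool) → Bool
  | 0, _ => false
  | n + 1, c => included c n

lemma Fib_add_two (n : ℕ) : Fib (n + 2) = Fib (n + 1) + Fib n := by
  simp only [Fib, Nat.fib_add_two]
  ring

lemma included_eq_not_lastIncluded_and (c : ℕ → Bool) (n : ℕ) :
    included c n = (!lastIncluded n c && c n) := by
  cases n <;> simp [included, lastIncluded]

lemma included_update_of_lt (c : ℕ → Bool) (b : Bool) {n k : ℕ} (hk : k < n) :
    included (Function.update c n b) k = included c k := by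
  induction k with
  | zero => simp [included, Function.update_of_ne hk.ne]
  | succ k ih => simp [included, Function.update_of_ne hk.ne, ih (by omega)]

lemma lastIncluded_update (c : ℕ → Bool) (b : Bool) (n : ℕ) :
    lastIncluded n (Function.update c n b) = lastIncluded n c := by
  cases n with
  | zero => rfl
  | succ n => exact included_update_of_lt c b (Nat.lt_succ_self n)

lemma zeckSum_update (c : ℕ → Bool) (b : Bool) (n : ℕ) :
    zeckSum n (Function.update c n b) = zeckSum n c := by
  refine sum_congr rfl fun j hj => ?_
  rw [included_update_of_lt c b (by simp at hj; omega)]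

lemma zeckSum_zero (c : ℕ → Bool) : zeckSum 0 c = 0 := rfl

lemma zeckSum_succ (n : ℕ) (c : ℕ → Bool) :
    zeckSum (n + 1) c = zeckSum n c + if included c n = true then Fib (n + 1) else 0 := by
  rw [zeckSum, ← insert_Icc_right_eq_Icc_add_one (by omega), sum_insert (by simp)]
  simp [zeckSum, add_comm]

lemma zeckSum_update_succ (c : ℕ → Bool) (b : Bool) (n : ℕ) :
    zeckSum (n + 1) (Function.update c n b) =
      zeckSum n c + if (!lastIncluded n c && b) = true then Fib (n + 1) else 0 := by
  rw [zeckSum_succ, zeckSum_update, included_eq_not_lastIncluded_and, lastIncluded_update,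
    Function.update_self]

theorem zeckSum_lt_Fib_succ (c : ℕ → Bool) : ∀ n, zeckSum n c < Fib (n + 1)
  | 0 => by simp [zeckSum_zero, Fib]
  | 1 => by
    rw [zeckSum_succ, zeckSum_zero]
    split <;> simp [Fib, Nat.fib_add_two]
  | n + 2 => by
    have ih := zeckSum_lt_Fib_succ c n
    have hF : Fib (n + 2 + 1) = Fib (n + 1 + 1) + Fib (n + 1) := Fib_add_two (n + 1)
    have hF' : Fib (n + 1 + 1) = Fib (n + 1) + Fib n := Fib_add_two n
    rw [zeckSum_succ, zeckSum_succ]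
    by_cases h : included c n
    · have : ¬included c (n + 1) = true := by simp [included, h]
      rw [if_pos h, if_neg this]
      omega
    · rw [if_neg h]
      split <;> omega

theorem zeckSum_lt_Fib_of_not_lastIncluded {n : ℕ} {c : ℕ → Bool}
    (h : lastIncluded n c = false) :
    zeckSum n c < Fib n := by
  cases n with
  | zero => simp [zeckSum_zero, Fib]
  | succ n =>
    rw [zeckSum_succ, if_neg (by simpa [lastIncluded] using h), add_zero]
    exact zeckSum_lt_Fib_succ c n

theorem Fib_le_zeckSum_of_lastIncluded {n : ℕ} {c : ℕ → Bool} (h : lastIncluded n c = true) :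
    Fib n ≤ zeckSum n c := by
  cases n with
  | zero => simp [lastIncluded] at h
  | succ n =>
    rw [zeckSum_succ, if_pos (show included c n = true from h)]
    omega

lemma ext_snoc {n : ℕ} (c : Fin n → Bool) (b : Bool) :
    _root_.ext (n + 1) (Fin.snoc c b) = Function.update (_root_.ext n c) n b := by
  funext j
  rcases lt_trichotomy j n with hj | rfl | hj
  · rw [Function.update_of_ne hj.ne]
    simp only [_root_.ext, hj, Nat.lt_succ_of_lt hj, dite_true]
    exact Fin.snoc_castSucc (α := fun _ => Bool) (p := c) (x := b) (i := ⟨j, hj⟩)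
  · simp [_root_.ext, show (⟨j, _⟩ : Fin (j + 1)) = Fin.last j from rfl]
  · simp [_root_.ext, hj.not_gt, (Nat.succ_le_of_lt hj).not_gt, Function.update_of_ne hj.ne']

lemma wt_snoc (p : ℝ) {n : ℕ} (c : Fin n → Bool) (b : Bool) :
    wt p (Fin.snoc c b : Fin (n + 1) → Bool) = wt p c * if b then p else 1 - p := by
  simp [wt, Fin.prod_univ_castSucc]

open Classical in
theorem finProb_succ (p : ℝ) (n : ℕ) (E : (ℕ → Bool) → Prop) :
    finProb p (n + 1) E = p * finProb p n (fun c => E (Function.update c n true)) +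
      (1 - p) * finProb p n (fun c => E (Function.update c n false)) := by
  simp only [finProb, mul_sum, ← sum_add_distrib]
  rw [← (Fin.snocEquiv fun _ => Bool).sum_comp, Fintype.sum_prod_type_right]
  refine sum_congr rfl fun c _ => ?_
  have hsnoc (b : Bool) : (Fin.snocEquiv fun _ => Bool) (b, c) = Fin.snoc c b := rfl
  simp only [Fintype.sum_bool, hsnoc, ext_snoc, wt_snoc, Bool.false_eq_true, ↓reduceIte]
  split_ifs <;> ring

lemma finProb_false (p : ℝ) (n : ℕ) : finProb p n (fun _ => False) = 0 := by
  simp [finProb]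

lemma zeckSum_update_succ_false (c : ℕ → Bool) (n : ℕ) :
    zeckSum (n + 1) (Function.update c n false) = zeckSum n c := by
  simp [zeckSum_update_succ]

lemma zeckSum_update_succ_true (c : ℕ → Bool) (n : ℕ) :
    zeckSum (n + 1) (Function.update c n true) =
      if lastIncluded n c then zeckSum n c else zeckSum n c + Fib (n + 1) := by
  rw [zeckSum_update_succ]
  cases lastIncluded n c <;> simp

theorem zeckSum_update_succ_true_eq_iff {c : ℕ → Bool} {n m : ℕ} :
    zeckSum (n + 1) (Function.update c n true) = m ↔
      if m < Fib (n + 1) then Fib n ≤ m ∧ zeckSum n c = m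
      else zeckSum n c < Fib n ∧ zeckSum n c + Fib (n + 1) = m := by
  have hlt := zeckSum_lt_Fib_succ c n
  rw [zeckSum_update_succ_true]
  cases h : lastIncluded n c
  · have := zeckSum_lt_Fib_of_not_lastIncluded h
    simp only [Bool.false_eq_true, ↓reduceIte]
    split_ifs <;> omega
  · have := Fib_le_zeckSum_of_lastIncluded h
    simp only [↓reduceIte]
    split_ifs <;> omega

section StepRecursion

variable (p : ℝ) {n m : ℕ}

theorem finProb_zeckSum_succ_of_lt_Fib (hm : m < Fib n) :
    finProb p (n + 1) (fun c => zeckSum (n + 1) c = m) =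
      (1 - p) * finProb p n (fun c => zeckSum n c = m) := by
  have hmono : Fib n ≤ Fib (n + 1) := Nat.fib_le_fib_succ
  simp only [finProb_succ, zeckSum_update_succ_false, zeckSum_update_succ_true_eq_iff,
    if_pos (hm.trans_le hmono), not_le.2 hm, false_and, finProb_false, mul_zero, zero_add]

theorem finProb_zeckSum_succ_of_Fib_le_of_lt (h₁ : Fib n ≤ m) (h₂ : m < Fib (n + 1)) :
    finProb p (n + 1) (fun c => zeckSum (n + 1) c = m) =
      finProb p n (fun c => zeckSum n c = m) := by
  simp only [finProb_succ, zeckSum_update_succ_false, zeckSum_update_succ_true_eq_iff,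
    if_pos h₂, h₁, true_and]
  ring

theorem finProb_zeckSum_succ_of_Fib_succ_le_of_lt (h₁ : Fib (n + 1) ≤ m)
    (h₂ : m < Fib (n + 2)) :
    finProb p (n + 1) (fun c => zeckSum (n + 1) c = m) =
      p * finProb p n (fun c => zeckSum n c = m - Fib (n + 1)) := by
  have heads (c : ℕ → Bool) :
      zeckSum (n + 1) (Function.update c n true) = m ↔ zeckSum n c = m - Fib (n + 1) := by
    have := Fib_add_two n
    rw [zeckSum_update_succ_true_eq_iff, if_neg (not_lt.2 h₁)]
    omega
  have tails (c : ℕ → Bool) : ¬zeckSum (n + 1) (Function.update c n false) = m := by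
    have := zeckSum_lt_Fib_succ c n
    rw [zeckSum_update_succ_false]
    omega
  simp only [finProb_succ, heads, tails, finProb_false, mul_zero, add_zero]

end StepRecursion

lemma one_sub_inv_goldenRatio_sq : 1 - (goldenRatio ^ 2)⁻¹ = goldenRatio⁻¹ := by
  have hinv : goldenRatio⁻¹ = goldenRatio - 1 :=
    inv_eq_of_mul_eq_one_right (by linear_combination goldenRatio_sq)
  rw [← inv_pow, hinv]
  linear_combination (-1 : ℝ) * goldenRatio_sq

theorem finProb_zeckSum_eq (n m : ℕ) (hm : m < Fib (n + 1)) :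
    finProb (goldenRatio ^ 2)⁻¹ n (fun c => zeckSum n c = m) =
      if m < Fib n then goldenRatio ^ (-(n : ℤ)) else goldenRatio ^ (-((n : ℤ) + 1)) := by
  induction n generalizing m with
  | zero =>
    obtain rfl : m = 0 := by simpa [Fib] using hm
    simp [finProb, wt, zeckSum_zero, Fib]
  | succ n ih =>
    have h0 := goldenRatio_ne_zero
    have hmono : Fib n ≤ Fib (n + 1) := Nat.fib_le_fib_succ
    have hF : Fib (n + 1 + 1) = Fib (n + 1) + Fib n := Fib_add_two n
    rcases lt_or_ge m (Fib n) with h | h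
    · rw [finProb_zeckSum_succ_of_lt_Fib _ h, ih m (by omega), if_pos h, if_pos (by omega),
        one_sub_inv_goldenRatio_sq, ← zpow_neg_one, ← zpow_add₀ h0]
      push_cast
      ring_nf
    rcases lt_or_ge m (Fib (n + 1)) with h' | h'
    · rw [finProb_zeckSum_succ_of_Fib_le_of_lt _ h h', ih m h', if_neg (not_lt.2 h), if_pos h']
      push_cast
      rfl
    · rw [finProb_zeckSum_succ_of_Fib_succ_le_of_lt _ h' hm, ih _ (by omega), if_pos (by omega),
        if_neg (not_lt.2 h'), ← zpow_natCast, ← zpow_neg, ← zpow_add₀ h0]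
      push_cast
      ring_nf

/-- **Lemma.** With `p = 1/φ²`, the probability that the random process `A_n(p)` produces the
Zeckendorf decomposition of a fixed integer `m ∈ [0, F_{n+1})` equals `φ^{-n}` if
`m ∈ [0, F_n)` and `φ^{-(n+1)}` if `m ∈ [F_n, F_{n+1})`. -/
theorem prob_random_process_eq_m (n m : ℕ) (hm : m < Fib (n + 1)) :
    letI φ : ℝ := (1 + Real.sqrt 5) / 2
    letI p : ℝ := (φ ^ 2)⁻¹
    (m < Fib n →
      finProb p n (fun c => (∑ j ∈ Finset.Icc 1 n,
          if included c (j - 1) = true then Fib j else 0) = m) = φ ^ (-(n : ℤ))) ∧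
    (Fib n ≤ m →
      finProb p n (fun c => (∑ j ∈ Finset.Icc 1 n,
          if included c (j - 1) = true then Fib j else 0) = m) = φ ^ (-((n : ℤ) + 1))) := by
  have h := finProb_zeckSum_eq n m hm
  refine ⟨fun hlt => ?_, fun hle => ?_⟩
  · rwa [if_pos hlt] at h
  · rwa [if_neg (not_lt.2 hle)] at h

end
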